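/- Let D ∈ [0,u]^{n×r} be a dataset with no two distinct rows sharing the same nonzero value in the same column (a 'rank normalized' dataset). Suppose rows i and i' satisfy D_{i,j} = v−1 for some column j and integer v ≥ 1, and row i' equals v·e_j (value v in column j, zero elsewhere). Let D' agree with D except D'_{i,j} = v and D'_{i',j} = v−1 (an 'incremental swap'). Then for a uniform size-k sample S and any ρ > T, P_{S∼D}(∃Θ ∈ Θ̄_D : R_S(Θ) ≥ ρ) ≥ P_{S∼D'}(∃Θ ∈ Θ̄_{D'} : R_S(Θ) ≥ ρ); i.e., the incremental swap cannot increase the failure probability. -/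

import Mathlib

open scoped Classical

noncomputable section

def domSet {n r : ℕ} (D : Fin n → Fin r → ℝ) (Θ : Fin r → ℝ) : Finset (Fin n) :=
  Finset.univ.filter (fun i => ∀ j, D i j ≤ Θ j)

def trueRecall {n r : ℕ} (D : Fin n → Fin r → ℝ) (Θ : Fin r → ℝ) : ℝ :=
  ((domSet D Θ).card : ℝ) / (n : ℝ)

def sampleRecall {n r : ℕ} (D : Fin n → Fin r → ℝ) (S : Finset (Fin n))
    (Θ : Fin r → ℝ) : ℝ :=
  ((domSet D Θ ∩ S).card : ℝ) / (S.card : ℝ)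

def failSet {n r : ℕ} (k : ℕ) (D : Fin n → Fin r → ℝ) (T ρ : ℝ) :
    Finset (Finset (Fin n)) :=
  ((Finset.univ : Finset (Fin n)).powersetCard k).filter
    (fun S => ∃ Θ : Fin r → ℝ, trueRecall D Θ < T ∧ ρ ≤ sampleRecall D S Θ)

namespace Stmt7Aux

variable {n r : ℕ}

/-- rows other than `i, i'` dominated by `Θ` (w.r.t. `D`). -/
def xset (D : Fin n → Fin r → ℝ) (i i' : Fin n) (Θ : Fin r → ℝ) : Finset (Fin n) :=
  Finset.univ.filter (fun w => w ≠ i ∧ w ≠ i' ∧ ∀ j', D w j' ≤ Θ j')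

/-- window predicate -/
def winp (j : Fin r) (v : ℕ) (Θ : Fin r → ℝ) : Prop :=
  (∀ j', j' ≠ j → 0 ≤ Θ j') ∧ ((v:ℝ) - 1 ≤ Θ j ∧ Θ j < v)

/-- row `i`'s off-`j` coordinates dominated -/
def athp (D : Fin n → Fin r → ℝ) (i : Fin n) (j : Fin r) (Θ : Fin r → ℝ) : Prop :=
  ∀ j', j' ≠ j → D i j' ≤ Θ j'

/-- middle rows of the slice -/
def mset (D : Fin n → Fin r → ℝ) (i i' : Fin n) (j : Fin r) (v : ℕ) (Θ : Fin r → ℝ) :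
    Finset (Fin n) :=
  Finset.univ.filter (fun w => w ≠ i ∧ w ≠ i' ∧ Θ j < D w j ∧ D w j < v ∧
    ∀ j', j' ≠ j → D w j' ≤ Θ j')

def thup (D : Fin n → Fin r → ℝ) (j : Fin r) (Θ : Fin r → ℝ) (w : Fin n) : Fin r → ℝ :=
  Function.update Θ j (D w j)

def mgood (D : Fin n → Fin r → ℝ) (i i' : Fin n) (j : Fin r) (v : ℕ) (T : ℝ)
    (Θ : Fin r → ℝ) (S : Finset (Fin n)) : Finset (Fin n) :=
  (mset D i i' j v Θ).filter (fun w =>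
    ((xset D i i' (thup D j Θ w)).card : ℝ) < T * n ∧
    (xset D i i' (thup D j Θ w) \ xset D i i' Θ) ∩ S = ∅)

def candp (D : Fin n → Fin r → ℝ) (i i' : Fin n) (j : Fin r) (v : ℕ) (k : ℕ) (T ρ : ℝ)
    (S : Finset (Fin n)) (z : Fin n) : Prop :=
  ∃ Θ, winp j v Θ ∧ (((xset D i i' Θ).card : ℝ) + 1 < T * n) ∧
    (ρ * k - 1 ≤ ((xset D i i' Θ ∩ S).card : ℝ)) ∧
    ((z = i ∧ athp D i j Θ) ∨ z ∈ mgood D i i' j v T Θ S)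

def candset (D : Fin n → Fin r → ℝ) (i i' : Fin n) (j : Fin r) (v : ℕ) (k : ℕ) (T ρ : ℝ)
    (S : Finset (Fin n)) : Finset (Fin n) :=
  Finset.univ.filter (candp D i i' j v k T ρ S)

def zchoice (D : Fin n → Fin r → ℝ) (i i' : Fin n) (j : Fin r) (v : ℕ) (k : ℕ) (T ρ : ℝ)
    (S : Finset (Fin n)) : Fin n :=
  if i ∈ candset D i i' j v k T ρ S then i
  else if h : (candset D i i' j v k T ρ S).Nonempty then
    Classical.choose ((candset D i i' j v k T ρ S).exists_max_image (fun w => D w j) h)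
  else i

/-- real-count failure predicate -/
def flp (E : Fin n → Fin r → ℝ) (k : ℕ) (T ρ : ℝ) (S : Finset (Fin n)) : Prop :=
  ∃ Θ, ((domSet E Θ).card : ℝ) < T * n ∧ ρ * k ≤ ((domSet E Θ ∩ S).card : ℝ)

lemma mem_domSet {E : Fin n → Fin r → ℝ} {Θ : Fin r → ℝ} {w : Fin n} :
    w ∈ domSet E Θ ↔ ∀ j', E w j' ≤ Θ j' := by simp [domSet]

lemma mem_xset {D : Fin n → Fin r → ℝ} {i i' : Fin n} {Θ : Fin r → ℝ} {w : Fin n} :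
    w ∈ xset D i i' Θ ↔ w ≠ i ∧ w ≠ i' ∧ ∀ j', D w j' ≤ Θ j' := by simp [xset]

lemma mem_mset {D : Fin n → Fin r → ℝ} {i i' : Fin n} {j : Fin r} {v : ℕ}
    {Θ : Fin r → ℝ} {w : Fin n} :
    w ∈ mset D i i' j v Θ ↔ w ≠ i ∧ w ≠ i' ∧ Θ j < D w j ∧ D w j < v ∧
      ∀ j', j' ≠ j → D w j' ≤ Θ j' := by simp [mset]

lemma zc_spec {D : Fin n → Fin r → ℝ} {i i' : Fin n} {j : Fin r} {v k : ℕ} {T ρ : ℝ}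
    {S : Finset (Fin n)} (hiC : i ∉ candset D i i' j v k T ρ S)
    (hne : (candset D i i' j v k T ρ S).Nonempty) :
    zchoice D i i' j v k T ρ S ∈ candset D i i' j v k T ρ S ∧
    ∀ z' ∈ candset D i i' j v k T ρ S,
      D z' j ≤ D (zchoice D i i' j v k T ρ S) j := by
  unfold zchoice
  rw [if_neg hiC, dif_pos hne]
  have h := Classical.choose_spec
    ((candset D i i' j v k T ρ S).exists_max_image (fun w => D w j) hne)
  exact ⟨h.1, h.2⟩

lemma zc_eq_of_mem {D : Fin n → Fin r → ℝ} {i i' : Fin n} {j : Fin r} {v k : ℕ} {T ρ : ℝ}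
    {S : Finset (Fin n)} (hiC : i ∈ candset D i i' j v k T ρ S) :
    zchoice D i i' j v k T ρ S = i := by
  unfold zchoice
  rw [if_pos hiC]

lemma i_not_mem_xset {D : Fin n → Fin r → ℝ} {i i' : Fin n} {Θ : Fin r → ℝ} :
    i ∉ xset D i i' Θ := by simp [mem_xset]

lemma i'_not_mem_xset {D : Fin n → Fin r → ℝ} {i i' : Fin n} {Θ : Fin r → ℝ} :
    i' ∉ xset D i i' Θ := by
  simp only [mem_xset]; tauto

lemma xset_mono {D : Fin n → Fin r → ℝ} {i i' : Fin n} {Θ Θ' : Fin r → ℝ}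
    (h : ∀ j', Θ j' ≤ Θ' j') : xset D i i' Θ ⊆ xset D i i' Θ' := by
  intro w hw
  rw [mem_xset] at hw ⊢
  exact ⟨hw.1, hw.2.1, fun j' => (hw.2.2 j').trans (h j')⟩



section Counting
variable {α : Type*} [DecidableEq α]

lemma card_insert_inter_mem {a : α} {t S : Finset α} (ha : a ∈ S) (hat : a ∉ t) :
    ((insert a t) ∩ S).card = (t ∩ S).card + 1 := by
  rw [Finset.insert_inter_of_mem ha, Finset.card_insert_of_notMem]
  exact fun h => hat (Finset.mem_of_mem_inter_left h)

lemma insert_inter_not_mem {a : α} {t S : Finset α} (ha : a ∉ S) :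
    (insert a t) ∩ S = t ∩ S := Finset.insert_inter_of_notMem ha

lemma inter_insert_not_mem' {a : α} {t u : Finset α} (ha : a ∉ t) :
    t ∩ (insert a u) = t ∩ u := by
  ext w
  simp only [Finset.mem_inter, Finset.mem_insert]
  constructor
  · rintro ⟨hwt, rfl | hwu⟩
    · exact absurd hwt ha
    · exact ⟨hwt, hwu⟩
  · rintro ⟨hwt, hwu⟩
    exact ⟨hwt, Or.inr hwu⟩

lemma inter_insert_mem' {a : α} {t u : Finset α} (ha : a ∈ t) :
    t ∩ (insert a u) = insert a (t ∩ u) := by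
  ext w
  simp only [Finset.mem_inter, Finset.mem_insert]
  constructor
  · rintro ⟨hwt, rfl | hwu⟩
    · exact Or.inl rfl
    · exact Or.inr ⟨hwt, hwu⟩
  · rintro (rfl | ⟨hwt, hwu⟩)
    · exact ⟨ha, Or.inl rfl⟩
    · exact ⟨hwt, Or.inr hwu⟩

lemma inter_erase_not_mem' {a : α} {t S : Finset α} (ha : a ∉ t) :
    t ∩ (S.erase a) = t ∩ S := by
  ext w
  simp only [Finset.mem_inter, Finset.mem_erase]
  constructor
  · rintro ⟨hwt, -, hwS⟩
    exact ⟨hwt, hwS⟩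
  · rintro ⟨hwt, hwS⟩
    exact ⟨hwt, fun h => ha (h ▸ hwt), hwS⟩

lemma inter_erase_eq {a : α} {t S : Finset α} :
    t ∩ (S.erase a) = (t ∩ S).erase a := by
  ext w
  simp only [Finset.mem_inter, Finset.mem_erase]
  tauto

lemma card_inter_mono {t d S : Finset α} (h : t ⊆ d) : (t ∩ S).card ≤ (d ∩ S).card :=
  Finset.card_le_card (Finset.inter_subset_inter_right h)

end Counting

set_option linter.unusedSectionVars false

section Structural

variable {n r : ℕ} {D D' : Fin n → Fin r → ℝ} {i i' : Fin n} {j : Fin r} {v : ℕ}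

lemma row_le_iff {E : Fin n → Fin r → ℝ} {w : Fin n} {Θ : Fin r → ℝ} :
    (∀ j', E w j' ≤ Θ j') ↔ (E w j ≤ Θ j ∧ ∀ j', j' ≠ j → E w j' ≤ Θ j') := by
  constructor
  · exact fun h => ⟨h j, fun j' _ => h j'⟩
  · rintro ⟨h1, h2⟩ j'
    by_cases hj : j' = j
    · subst hj; exact h1
    · exact h2 j' hj

variable (hii' : i ≠ i') (hv : 1 ≤ v)
  (h0 : ∀ w j', 0 ≤ D w j')
  (hDi : D i j = (v:ℝ) - 1)
  (hDi' : ∀ j', D i' j' = if j' = j then (v:ℝ) else 0)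
  (hD'i : ∀ j', D' i j' = if j' = j then (v:ℝ) else D i j')
  (hD'i' : ∀ j', D' i' j' = if j' = j then (v:ℝ) - 1 else 0)
  (hD'o : ∀ w, w ≠ i → w ≠ i' → ∀ j', D' w j' = D w j')

section
include hDi' hD'o

lemma other_mem_iff {w : Fin n} (hwi : w ≠ i) (hwi' : w ≠ i') {Θ : Fin r → ℝ} :
    (w ∈ domSet D Θ ↔ w ∈ xset D i i' Θ) ∧ (w ∈ domSet D' Θ ↔ w ∈ xset D i i' Θ) := by
  constructor
  · rw [mem_domSet, mem_xset]; tauto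
  · rw [mem_domSet, mem_xset]
    constructor
    · intro h; exact ⟨hwi, hwi', fun j' => by rw [← hD'o w hwi hwi' j']; exact h j'⟩
    · intro h j'; rw [hD'o w hwi hwi' j']; exact h.2.2 j'

end

include hii' hv h0 hDi hDi' hD'i hD'i' hD'o

lemma nonwin_eq {Θ : Fin r → ℝ} (hw : ¬ winp j v Θ) : domSet D' Θ = domSet D Θ := by
  have hv' : (1:ℝ) ≤ v := by exact_mod_cast hv
  ext w
  by_cases hwi : w = i
  · rw [hwi, mem_domSet, mem_domSet, row_le_iff (j := j), row_le_iff (j := j)]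
    have hoff : ∀ j', j' ≠ j → (D' i j' ≤ Θ j' ↔ D i j' ≤ Θ j') := by
      intro j' hj'; rw [hD'i j', if_neg hj']
    rw [hD'i j, if_pos rfl, hDi]
    by_cases hB : ∀ j', j' ≠ j → 0 ≤ Θ j'
    · by_cases h1 : (v:ℝ) - 1 ≤ Θ j
      · have h2 : (v:ℝ) ≤ Θ j := by
          by_contra hc
          exact hw ⟨hB, h1, lt_of_not_ge hc⟩
        constructor
        · rintro ⟨_, hr⟩
          exact ⟨h1, fun j' hj' => (hoff j' hj').mp (hr j' hj')⟩
        · rintro ⟨_, hr⟩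
          exact ⟨h2, fun j' hj' => (hoff j' hj').mpr (hr j' hj')⟩
      · push_neg at h1
        constructor
        · rintro ⟨hj, _⟩
          exact absurd hj (not_le.mpr (by linarith))
        · rintro ⟨hj, _⟩
          exact absurd hj (not_le.mpr h1)
    · push_neg at hB
      obtain ⟨j₀, hj₀, hneg⟩ := hB
      constructor
      · rintro ⟨_, hr⟩
        have := hr j₀ hj₀
        rw [hD'i j₀, if_neg hj₀] at this
        exact absurd this (not_le.mpr (lt_of_lt_of_le hneg (h0 i j₀)))
      · rintro ⟨_, hr⟩
        exact absurd (hr j₀ hj₀) (not_le.mpr (lt_of_lt_of_le hneg (h0 i j₀)))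
  · by_cases hwi' : w = i'
    · rw [hwi', mem_domSet, mem_domSet, row_le_iff (j := j), row_le_iff (j := j)]
      have hoff : ∀ j', j' ≠ j → (D' i' j' ≤ Θ j' ↔ D i' j' ≤ Θ j') := by
        intro j' hj'; rw [hD'i' j', if_neg hj', hDi' j', if_neg hj']
      rw [hD'i' j, if_pos rfl, hDi' j, if_pos rfl]
      by_cases hB : ∀ j', j' ≠ j → 0 ≤ Θ j'
      · by_cases h1 : (v:ℝ) - 1 ≤ Θ j
        · have h2 : (v:ℝ) ≤ Θ j := by
            by_contra hc
            exact hw ⟨hB, h1, lt_of_not_ge hc⟩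
          constructor
          · rintro ⟨_, hr⟩
            exact ⟨h2, fun j' hj' => (hoff j' hj').mp (hr j' hj')⟩
          · rintro ⟨_, hr⟩
            exact ⟨by linarith, fun j' hj' => (hoff j' hj').mpr (hr j' hj')⟩
        · push_neg at h1
          constructor
          · rintro ⟨hj, _⟩
            exact absurd hj (not_le.mpr h1)
          · rintro ⟨hj, _⟩
            exact absurd hj (not_le.mpr (by linarith))
      · push_neg at hB
        obtain ⟨j₀, hj₀, hneg⟩ := hB
        constructor
        · rintro ⟨_, hr⟩
          have := hr j₀ hj₀
          rw [hD'i' j₀, if_neg hj₀] at this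
          exact absurd this (not_le.mpr hneg)
        · rintro ⟨_, hr⟩
          have := hr j₀ hj₀
          rw [hDi' j₀, if_neg hj₀] at this
          exact absurd this (not_le.mpr hneg)
    · rw [(other_mem_iff hDi' hD'o hwi hwi').1, (other_mem_iff hDi' hD'o hwi hwi').2]

lemma win_dom' {Θ : Fin r → ℝ} (hw : winp j v Θ) :
    domSet D' Θ = insert i' (xset D i i' Θ) := by
  obtain ⟨hB, h1, h2⟩ := hw
  ext w
  rw [Finset.mem_insert]
  by_cases hwi' : w = i'
  · rw [hwi']
    simp only [eq_self_iff_true, true_or, iff_true]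
    rw [mem_domSet, row_le_iff (j := j)]
    refine ⟨by rw [hD'i' j, if_pos rfl]; exact h1, fun j' hj' => ?_⟩
    rw [hD'i' j', if_neg hj']
    exact hB j' hj'
  · by_cases hwi : w = i
    · rw [hwi]
      simp only [hii', (show i ≠ i' from hii'), false_or]
      constructor
      · intro h
        rw [mem_domSet] at h
        have := h j
        rw [hD'i j, if_pos rfl] at this
        exact absurd this (not_le.mpr h2)
      · intro h
        exact absurd (mem_xset.mp h).1 (not_not_intro rfl)
    · simp only [hwi', false_or]
      exact (other_mem_iff hDi' hD'o hwi hwi').2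

lemma win_domA {Θ : Fin r → ℝ} (hw : winp j v Θ) (hA : athp D i j Θ) :
    domSet D Θ = insert i (xset D i i' Θ) := by
  obtain ⟨hB, h1, h2⟩ := hw
  ext w
  rw [Finset.mem_insert]
  by_cases hwi : w = i
  · rw [hwi]
    simp only [eq_self_iff_true, true_or, iff_true]
    rw [mem_domSet, row_le_iff (j := j)]
    exact ⟨by rw [hDi]; exact h1, fun j' hj' => hA j' hj'⟩
  · by_cases hwi' : w = i'
    · rw [hwi']
      simp only [(show i' ≠ i from hii'.symm), false_or]
      constructor
      · intro h
        rw [mem_domSet] at h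
        have := h j
        rw [hDi' j, if_pos rfl] at this
        exact absurd this (not_le.mpr h2)
      · intro h
        exact absurd (mem_xset.mp h).2.1 (not_not_intro rfl)
    · simp only [hwi, false_or]
      exact (other_mem_iff hDi' hD'o hwi hwi').1

lemma win_domNA {Θ : Fin r → ℝ} (hw : winp j v Θ) (hA : ¬ athp D i j Θ) :
    domSet D Θ = xset D i i' Θ := by
  obtain ⟨hB, h1, h2⟩ := hw
  ext w
  by_cases hwi : w = i
  · rw [hwi]
    constructor
    · intro h
      rw [mem_domSet] at h
      exact absurd (fun j' hj' => h j') hA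
    · intro h
      exact absurd (mem_xset.mp h).1 (not_not_intro rfl)
  · by_cases hwi' : w = i'
    · rw [hwi']
      constructor
      · intro h
        rw [mem_domSet] at h
        have := h j
        rw [hDi' j, if_pos rfl] at this
        exact absurd this (not_le.mpr h2)
      · intro h
        exact absurd (mem_xset.mp h).2.1 (not_not_intro rfl)
    · exact (other_mem_iff hDi' hD'o hwi hwi').1

lemma dom_supset_x {Θ : Fin r → ℝ} (hw : winp j v Θ) :
    xset D i i' Θ ⊆ domSet D Θ ∧ domSet D Θ ⊆ insert i (xset D i i' Θ) := by
  by_cases hA : athp D i j Θ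
  · rw [win_domA hii' hv h0 hDi hDi' hD'i hD'i' hD'o hw hA]
    exact ⟨Finset.subset_insert _ _, le_refl _⟩
  · rw [win_domNA hii' hv h0 hDi hDi' hD'i hD'i' hD'o hw hA]
    exact ⟨le_refl _, Finset.subset_insert _ _⟩

variable {k : ℕ} {T ρ : ℝ} {S : Finset (Fin n)}

lemma i'_mem_S (hf' : flp D' k T ρ S) (hnf : ¬ flp D k T ρ S) : i' ∈ S := by
  by_contra hi'S
  obtain ⟨Θ, hbad, hcatch⟩ := hf'
  by_cases hw : winp j v Θ
  · rw [win_dom' hii' hv h0 hDi hDi' hD'i hD'i' hD'o hw] at hbad hcatch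
    rw [insert_inter_not_mem hi'S] at hcatch
    have hc1 : (domSet D Θ).card ≤ (insert i' (xset D i i' Θ)).card := by
      rw [Finset.card_insert_of_notMem i'_not_mem_xset]
      exact le_trans
        (Finset.card_le_card (dom_supset_x hii' hv h0 hDi hDi' hD'i hD'i' hD'o hw).2)
        (Finset.card_insert_le _ _)
    refine hnf ⟨Θ, lt_of_le_of_lt (by exact_mod_cast hc1) hbad, le_trans hcatch ?_⟩
    exact_mod_cast card_inter_mono
      (dom_supset_x hii' hv h0 hDi hDi' hD'i hD'i' hD'o hw).1
  · rw [nonwin_eq hii' hv h0 hDi hDi' hD'i hD'i' hD'o hw] at hbad hcatch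
    exact hnf ⟨Θ, hbad, hcatch⟩

/-- every witness for `D'`-failure (when `D` doesn't fail) is a window witness with
the standard numeric facts. -/
lemma witness_window {Θ : Fin r → ℝ} (hnf : ¬ flp D k T ρ S) (hi'S : i' ∈ S)
    (hbad : ((domSet D' Θ).card : ℝ) < T * n)
    (hcatch : ρ * k ≤ ((domSet D' Θ ∩ S).card : ℝ)) :
    winp j v Θ ∧ ((xset D i i' Θ).card : ℝ) + 1 < T * n ∧
      ρ * k - 1 ≤ ((xset D i i' Θ ∩ S).card : ℝ) := by
  by_cases hw : winp j v Θ
  · rw [win_dom' hii' hv h0 hDi hDi' hD'i hD'i' hD'o hw] at hbad hcatch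
    rw [Finset.card_insert_of_notMem i'_not_mem_xset] at hbad
    rw [card_insert_inter_mem hi'S i'_not_mem_xset] at hcatch
    push_cast at hbad hcatch
    exact ⟨hw, by linarith, by linarith⟩
  · rw [nonwin_eq hii' hv h0 hDi hDi' hD'i hD'i' hD'o hw] at hbad hcatch
    exact absurd ⟨Θ, hbad, hcatch⟩ hnf

variable (hnrm : ∀ a b : Fin n, a ≠ b → ∀ j', D a j' ≠ 0 → D a j' ≠ D b j')

include hnrm

lemma mgood_nonempty {Θ : Fin r → ℝ} (hw : winp j v Θ) (hA : ¬ athp D i j Θ)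
    (hbadx : ((xset D i i' Θ).card : ℝ) + 1 < T * n)
    (hcx : ρ * k - 1 ≤ ((xset D i i' Θ ∩ S).card : ℝ))
    (hi'S : i' ∈ S) (hnf : ¬ flp D k T ρ S) :
    (mgood D i i' j v T Θ S).Nonempty := by
  obtain ⟨hB, h1, h2⟩ := hw
  have hv1 : (1:ℝ) ≤ (v:ℝ) := by exact_mod_cast hv
  have hΘj0 : (0:ℝ) ≤ Θ j := by linarith
  -- step 1: the threshold with j-coordinate raised to v
  set Θv : Fin r → ℝ := Function.update Θ j (v:ℝ) with hΘv
  have hΘvj : Θv j = (v:ℝ) := Function.update_self j _ Θ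
  have hΘvo : ∀ j', j' ≠ j → Θv j' = Θ j' := fun j' hj' => Function.update_of_ne hj' _ Θ
  have hmono : ∀ j', Θ j' ≤ Θv j' := by
    intro j'
    by_cases hj' : j' = j
    · rw [hj', hΘvj]; linarith
    · rw [hΘvo j' hj']
  have hxsub : xset D i i' Θ ⊆ xset D i i' Θv := xset_mono hmono
  -- step 2 : domSet D Θv = insert i' (xset D i i' Θv)
  have hdv : domSet D Θv = insert i' (xset D i i' Θv) := by
    ext w
    rw [Finset.mem_insert, mem_domSet, mem_xset]
    by_cases hwi' : w = i'
    · rw [hwi']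
      simp only [eq_self_iff_true, true_or, iff_true]
      intro j'
      by_cases hj' : j' = j
      · rw [hj', hDi' j, if_pos rfl, hΘvj]
      · rw [hDi' j', if_neg hj', hΘvo j' hj']
        exact hB j' hj'
    · by_cases hwi : w = i
      · rw [hwi]
        constructor
        · intro h
          exact absurd (fun j' hj' => by rw [← hΘvo j' hj']; exact h j') hA
        · rintro (h | h)
          · exact absurd h hii'
          · exact absurd h.1 (not_not_intro rfl)
      · simp only [hwi', false_or]
        tauto
  -- step 3 : this dominated set catches S
  have hcv : ρ * k ≤ ((domSet D Θv ∩ S).card : ℝ) := by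
    rw [hdv, card_insert_inter_mem hi'S i'_not_mem_xset]
    push_cast
    have := card_inter_mono (S := S) hxsub
    have : ((xset D i i' Θ ∩ S).card : ℝ) ≤ ((xset D i i' Θv ∩ S).card : ℝ) := by
      exact_mod_cast this
    linarith
  -- step 4 : therefore it is not bad
  have hnotbad : T * n ≤ ((domSet D Θv).card : ℝ) := by
    by_contra hc
    exact hnf ⟨Θv, lt_of_not_ge hc, hcv⟩
  have hcardv : ((xset D i i' Θv).card : ℝ) + 1 = ((domSet D Θv).card : ℝ) := by
    rw [hdv, Finset.card_insert_of_notMem i'_not_mem_xset]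
    push_cast
    ring
  -- step 5 : a middle row exists
  have hcards : (xset D i i' Θ).card < (xset D i i' Θv).card := by
    have : ((xset D i i' Θ).card : ℝ) < ((xset D i i' Θv).card : ℝ) := by linarith
    exact_mod_cast this
  have hnsub : ¬ (xset D i i' Θv ⊆ xset D i i' Θ) :=
    fun h => absurd (Finset.card_le_card h) (not_le.mpr hcards)
  obtain ⟨m, hmv, hmx⟩ := Finset.not_subset.mp hnsub
  rw [mem_xset] at hmv
  obtain ⟨hmi, hmi', hmle⟩ := hmv
  have hmmid : m ∈ mset D i i' j v Θ := by
    rw [mem_mset]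
    have hj : Θ j < D m j := by
      by_contra hc
      refine hmx (mem_xset.mpr ⟨hmi, hmi', fun j' => ?_⟩)
      by_cases hj' : j' = j
      · rw [hj']; exact le_of_not_gt hc
      · rw [← hΘvo j' hj']; exact hmle j'
    have hjv : D m j ≤ (v:ℝ) := by
      have := hmle j; rwa [hΘvj] at this
    have hne : D m j ≠ (v:ℝ) := by
      intro hc
      have := hnrm i' m (Ne.symm hmi') j
      rw [hDi' j, if_pos rfl] at this
      exact this (ne_of_gt (by linarith : (0:ℝ) < (v:ℝ))) hc.symm
    exact ⟨hmi, hmi', hj, lt_of_le_of_ne hjv hne, fun j' hj' => by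
      rw [← hΘvo j' hj']; exact hmle j'⟩
  -- step 6 : take the middle row with minimal j-value
  obtain ⟨m0, hm0, hmin⟩ :=
    (mset D i i' j v Θ).exists_min_image (fun w => D w j) ⟨m, hmmid⟩
  rw [mem_mset] at hm0
  obtain ⟨h0i, h0i', h0j, h0jv, h0off⟩ := hm0
  have hup : ∀ j', j' ≠ j → thup D j Θ m0 j' = Θ j' :=
    fun j' hj' => Function.update_of_ne hj' _ Θ
  have hupj : thup D j Θ m0 j = D m0 j := Function.update_self j _ Θ
  -- step 7 : the x-set of the raised threshold
  have hxup : xset D i i' (thup D j Θ m0) = insert m0 (xset D i i' Θ) := by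
    ext w
    rw [Finset.mem_insert, mem_xset]
    constructor
    · rintro ⟨hwi, hwi', hwle⟩
      by_cases hwj : D w j ≤ Θ j
      · refine Or.inr (mem_xset.mpr ⟨hwi, hwi', fun j' => ?_⟩)
        by_cases hj' : j' = j
        · rw [hj']; exact hwj
        · rw [← hup j' hj']; exact hwle j'
      · push_neg at hwj
        have hwjm : D w j ≤ D m0 j := by
          have := hwle j; rwa [hupj] at this
        have hwmid : w ∈ mset D i i' j v Θ := by
          rw [mem_mset]
          exact ⟨hwi, hwi', hwj, lt_of_le_of_lt hwjm h0jv, fun j' hj' => by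
            rw [← hup j' hj']; exact hwle j'⟩
        have : D m0 j ≤ D w j := hmin w hwmid
        have heq : D w j = D m0 j := le_antisymm hwjm this
        left
        by_contra hne
        exact hnrm w m0 hne j (ne_of_gt (lt_of_le_of_lt hΘj0 hwj)) heq
    · rintro (rfl | hw)
      · exact ⟨h0i, h0i', fun j' => by
          by_cases hj' : j' = j
          · rw [hj', hupj]
          · rw [hup j' hj']; exact h0off j' hj'⟩
      · rw [mem_xset] at hw
        exact ⟨hw.1, hw.2.1, fun j' => by
          by_cases hj' : j' = j
          · rw [hj', hupj]; exact le_of_lt (lt_of_le_of_lt (hw.2.2 j) h0j)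
          · rw [hup j' hj']; exact hw.2.2 j'⟩
  have hm0x : m0 ∉ xset D i i' Θ := by
    rw [mem_xset]
    rintro ⟨-, -, h⟩
    exact absurd (h j) (not_le.mpr h0j)
  have hwinup : winp j v (thup D j Θ m0) := by
    refine ⟨fun j' hj' => by rw [hup j' hj']; exact hB j' hj', ?_, ?_⟩
    · rw [hupj]; linarith
    · rw [hupj]; exact h0jv
  have hAup : ¬ athp D i j (thup D j Θ m0) := by
    intro hc
    exact hA (fun j' hj' => by rw [← hup j' hj']; exact hc j' hj')
  -- step 8 : m0 ∉ S
  have hm0S : m0 ∉ S := by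
    intro hm0S
    refine hnf ⟨thup D j Θ m0, ?_, ?_⟩
    · rw [win_domNA hii' hv h0 hDi hDi' hD'i hD'i' hD'o hwinup hAup, hxup,
        Finset.card_insert_of_notMem hm0x]
      push_cast
      linarith
    · rw [win_domNA hii' hv h0 hDi hDi' hD'i hD'i' hD'o hwinup hAup, hxup,
        card_insert_inter_mem hm0S hm0x]
      push_cast
      linarith
  -- conclude
  refine ⟨m0, Finset.mem_filter.mpr ⟨Finset.mem_filter.mpr ?_, ?_, ?_⟩⟩
  · exact ⟨Finset.mem_univ m0, h0i, h0i', h0j, h0jv, h0off⟩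
  · rw [hxup, Finset.card_insert_of_notMem hm0x]
    push_cast
    linarith
  · rw [hxup]
    ext w
    simp only [Finset.mem_inter, Finset.mem_sdiff, Finset.mem_insert,
      Finset.notMem_empty, iff_false]
    rintro ⟨⟨rfl | hw, hnx⟩, hwS⟩
    · exact hm0S hwS
    · exact hnx hw

lemma cand_nonempty (hf' : flp D' k T ρ S) (hnf : ¬ flp D k T ρ S) :
    (candset D i i' j v k T ρ S).Nonempty := by
  have hi'S : i' ∈ S := i'_mem_S hii' hv h0 hDi hDi' hD'i hD'i' hD'o hf' hnf
  obtain ⟨Θ, hbad, hcatch⟩ := hf'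
  obtain ⟨hwin, hbadx, hcx⟩ :=
    witness_window hii' hv h0 hDi hDi' hD'i hD'i' hD'o hnf hi'S hbad hcatch
  by_cases hath : athp D i j Θ
  · exact ⟨i, Finset.mem_filter.mpr ⟨Finset.mem_univ i,
      Θ, hwin, hbadx, hcx, Or.inl ⟨rfl, hath⟩⟩⟩
  · obtain ⟨m, hm⟩ := mgood_nonempty hii' hv h0 hDi hDi' hD'i hD'i' hD'o hnrm
      hwin hath hbadx hcx hi'S hnf
    exact ⟨m, Finset.mem_filter.mpr ⟨Finset.mem_univ m,
      Θ, hwin, hbadx, hcx, Or.inr hm⟩⟩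

omit hnrm

omit hii' hv h0 hDi hDi' hD'i hD'i' hD'o in
lemma cand_or (hiC : i ∈ candset D i i' j v k T ρ S) :
    ∃ Θ, winp j v Θ ∧ (((xset D i i' Θ).card : ℝ) + 1 < T * n) ∧
      (ρ * k - 1 ≤ ((xset D i i' Θ ∩ S).card : ℝ)) ∧ athp D i j Θ := by
  obtain ⟨Θ, hwin, hbadx, hcx, hor⟩ := (Finset.mem_filter.mp hiC).2
  rcases hor with ⟨-, hath⟩ | hmg
  · exact ⟨Θ, hwin, hbadx, hcx, hath⟩
  · have := (Finset.mem_filter.mp ((Finset.mem_filter.mp hmg).1)).2.1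
    exact absurd rfl this

lemma i_not_S (hnf : ¬ flp D k T ρ S) (hiC : i ∈ candset D i i' j v k T ρ S) : i ∉ S := by
  intro hiS
  obtain ⟨Θ, hwin, hbadx, hcx, hath⟩ := cand_or hiC
  refine hnf ⟨Θ, ?_, ?_⟩
  · rw [win_domA hii' hv h0 hDi hDi' hD'i hD'i' hD'o hwin hath,
      Finset.card_insert_of_notMem i_not_mem_xset]
    push_cast; linarith
  · rw [win_domA hii' hv h0 hDi hDi' hD'i hD'i' hD'o hwin hath,
      card_insert_inter_mem hiS i_not_mem_xset]
    push_cast; linarith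

lemma abranch_fails (hnf : ¬ flp D k T ρ S) (hiC : i ∈ candset D i i' j v k T ρ S) :
    flp D k T ρ (insert i (S.erase i')) := by
  obtain ⟨Θ, hwin, hbadx, hcx, hath⟩ := cand_or hiC
  refine ⟨Θ, ?_, ?_⟩
  · rw [win_domA hii' hv h0 hDi hDi' hD'i hD'i' hD'o hwin hath,
      Finset.card_insert_of_notMem i_not_mem_xset]
    push_cast; linarith
  · rw [win_domA hii' hv h0 hDi hDi' hD'i hD'i' hD'o hwin hath,
      card_insert_inter_mem (Finset.mem_insert_self i _) (i_not_mem_xset),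
      inter_insert_not_mem' (i_not_mem_xset), inter_erase_not_mem' (i'_not_mem_xset)]
    push_cast; linarith

lemma abranch_image_ok (hnf : ¬ flp D k T ρ S) (hi'S : i' ∈ S)
    (hiC : i ∈ candset D i i' j v k T ρ S) :
    ¬ flp D' k T ρ (insert i (S.erase i')) := by
  have hiS : i ∉ S := i_not_S hii' hv h0 hDi hDi' hD'i hD'i' hD'o hnf hiC
  rintro ⟨Λ, hbad, hcatch⟩
  by_cases hw : winp j v Λ
  · rw [win_dom' hii' hv h0 hDi hDi' hD'i hD'i' hD'o hw] at hbad hcatch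
    have hi'σ : i' ∉ insert i (S.erase i') := by
      simp only [Finset.mem_insert, Finset.mem_erase]
      rintro (h | ⟨h, -⟩)
      · exact hii' h.symm
      · exact h rfl
    rw [insert_inter_not_mem hi'σ, inter_insert_not_mem' (i_not_mem_xset),
      inter_erase_not_mem' (i'_not_mem_xset)] at hcatch
    refine hnf ⟨Λ, ?_, le_trans hcatch ?_⟩
    · refine lt_of_le_of_lt ?_ hbad
      have h1 : (domSet D Λ).card ≤ (xset D i i' Λ).card + 1 := le_trans
        (Finset.card_le_card (dom_supset_x hii' hv h0 hDi hDi' hD'i hD'i' hD'o hw).2)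
        (Finset.card_insert_le _ _)
      have h2 : (insert i' (xset D i i' Λ)).card = (xset D i i' Λ).card + 1 :=
        Finset.card_insert_of_notMem i'_not_mem_xset
      exact_mod_cast h2 ▸ h1
    · exact_mod_cast card_inter_mono
        (dom_supset_x hii' hv h0 hDi hDi' hD'i hD'i' hD'o hw).1
  · rw [nonwin_eq hii' hv h0 hDi hDi' hD'i hD'i' hD'o hw] at hbad hcatch
    have hkey : ((domSet D Λ ∩ (insert i (S.erase i'))).card : ℝ)
        ≤ ((domSet D Λ ∩ S).card : ℝ) := by
      by_cases hid : i ∈ domSet D Λ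
      · have hoff : ∀ j', j' ≠ j → 0 ≤ Λ j' :=
          fun j' hj' => le_trans (h0 i j') (mem_domSet.mp hid j')
        have h1 : (v:ℝ) - 1 ≤ Λ j := by
          have := mem_domSet.mp hid j
          rwa [hDi] at this
        have h2 : (v:ℝ) ≤ Λ j := by
          by_contra hc
          exact hw ⟨hoff, h1, lt_of_not_ge hc⟩
        have hi'd : i' ∈ domSet D Λ := by
          rw [mem_domSet]
          intro j'
          by_cases hj' : j' = j
          · rw [hj', hDi' j, if_pos rfl]; exact h2
          · rw [hDi' j', if_neg hj']; exact hoff j' hj'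
        have hiSe : i ∉ domSet D Λ ∩ (S.erase i') := by
          simp only [Finset.mem_inter, Finset.mem_erase]
          rintro ⟨-, -, hiS'⟩
          exact hiS hiS'
        have hi'dS : i' ∈ domSet D Λ ∩ S := Finset.mem_inter.mpr ⟨hi'd, hi'S⟩
        have hpos : 1 ≤ (domSet D Λ ∩ S).card := Finset.card_pos.mpr ⟨i', hi'dS⟩
        rw [inter_insert_mem' hid, Finset.card_insert_of_notMem hiSe,
          inter_erase_eq, Finset.card_erase_of_mem hi'dS]
        have : (domSet D Λ ∩ S).card - 1 + 1 = (domSet D Λ ∩ S).card :=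
          Nat.succ_pred_eq_of_pos hpos
        rw [this]
      · rw [inter_insert_not_mem' hid, inter_erase_eq]
        exact_mod_cast Finset.card_le_card (Finset.erase_subset _ _)
    exact hnf ⟨Λ, hbad, le_trans hcatch hkey⟩

omit hii' hv h0 hDi hDi' hD'i hD'i' hD'o in
lemma nabranch_pack (hiC : i ∉ candset D i i' j v k T ρ S)
    (hne : (candset D i i' j v k T ρ S).Nonempty) :
    ∃ Θ₀, (zchoice D i i' j v k T ρ S ≠ i ∧ zchoice D i i' j v k T ρ S ≠ i'
        ∧ zchoice D i i' j v k T ρ S ∉ S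
        ∧ (v:ℝ) - 1 < D (zchoice D i i' j v k T ρ S) j
        ∧ D (zchoice D i i' j v k T ρ S) j < v) ∧
      winp j v Θ₀ ∧ ¬ athp D i j Θ₀ ∧
      ((xset D i i' Θ₀).card : ℝ) < T * n ∧
      (∀ w ∈ xset D i i' Θ₀, D w j ≤ D (zchoice D i i' j v k T ρ S) j) ∧
      ρ * k ≤ ((xset D i i' Θ₀ ∩
        (insert (zchoice D i i' j v k T ρ S) (S.erase i'))).card : ℝ) := by
  set z := zchoice D i i' j v k T ρ S with hzdef
  have hzc := (zc_spec hiC hne).1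
  rw [← hzdef] at hzc
  have hzi : z ≠ i := by
    intro h
    rw [h] at hzc
    exact hiC hzc
  obtain ⟨Θ, hwin, hbadx, hcx, hor⟩ := (Finset.mem_filter.mp hzc).2
  rcases hor with ⟨hzi', -⟩ | hmg
  · exact absurd hzi' hzi
  obtain ⟨hzmem, hbadup, hdiff⟩ := Finset.mem_filter.mp hmg
  rw [mem_mset] at hzmem
  obtain ⟨-, hzi'', hzjΘ, hzjv, hzoff⟩ := hzmem
  have hup : ∀ j', j' ≠ j → thup D j Θ z j' = Θ j' :=
    fun j' hj' => Function.update_of_ne hj' _ Θ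
  have hupj : thup D j Θ z j = D z j := Function.update_self j _ Θ
  have hxsub : xset D i i' Θ ⊆ xset D i i' (thup D j Θ z) := by
    refine xset_mono (fun j' => ?_)
    by_cases hj' : j' = j
    · rw [hj', hupj]; exact le_of_lt hzjΘ
    · rw [hup j' hj']
  have hzup : z ∈ xset D i i' (thup D j Θ z) := by
    rw [mem_xset]
    refine ⟨hzi, hzi'', fun j' => ?_⟩
    by_cases hj' : j' = j
    · rw [hj', hupj]
    · rw [hup j' hj']; exact hzoff j' hj'
  have hzx : z ∉ xset D i i' Θ := by
    rw [mem_xset]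
    rintro ⟨-, -, h⟩
    exact absurd (h j) (not_le.mpr hzjΘ)
  have hzS : z ∉ S := by
    intro hzS
    have : z ∈ (xset D i i' (thup D j Θ z) \ xset D i i' Θ) ∩ S :=
      Finset.mem_inter.mpr ⟨Finset.mem_sdiff.mpr ⟨hzup, hzx⟩, hzS⟩
    rw [hdiff] at this
    exact absurd this (Finset.notMem_empty z)
  have hwinup : winp j v (thup D j Θ z) := by
    obtain ⟨hB, h1, h2⟩ := hwin
    refine ⟨fun j' hj' => by rw [hup j' hj']; exact hB j' hj', ?_, ?_⟩
    · rw [hupj]; linarith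
    · rw [hupj]; exact hzjv
  have hathup : ¬ athp D i j (thup D j Θ z) := by
    intro hc
    refine hiC (Finset.mem_filter.mpr ⟨Finset.mem_univ i, Θ, hwin, hbadx, hcx,
      Or.inl ⟨rfl, fun j' hj' => by rw [← hup j' hj']; exact hc j' hj'⟩⟩)
  have hxcap : xset D i i' (thup D j Θ z) ∩ S = xset D i i' Θ ∩ S := by
    apply Finset.Subset.antisymm
    · intro w hw
      obtain ⟨hw1, hw2⟩ := Finset.mem_inter.mp hw
      by_cases hwx : w ∈ xset D i i' Θ
      · exact Finset.mem_inter.mpr ⟨hwx, hw2⟩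
      · have : w ∈ (xset D i i' (thup D j Θ z) \ xset D i i' Θ) ∩ S :=
          Finset.mem_inter.mpr ⟨Finset.mem_sdiff.mpr ⟨hw1, hwx⟩, hw2⟩
        rw [hdiff] at this
        exact absurd this (Finset.notMem_empty w)
    · exact Finset.inter_subset_inter hxsub (Finset.Subset.refl S)
  refine ⟨thup D j Θ z, ⟨hzi, hzi'', hzS,
    lt_of_le_of_lt hwin.2.1 hzjΘ, hzjv⟩, hwinup, hathup, hbadup, ?_, ?_⟩
  · intro w hw
    have := (mem_xset.mp hw).2.2 j
    rwa [hupj] at this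
  · have hznot : z ∉ xset D i i' (thup D j Θ z) ∩ (S.erase i') := by
      simp only [Finset.mem_inter, Finset.mem_erase]
      rintro ⟨-, -, h⟩
      exact hzS h
    rw [inter_insert_mem' hzup, Finset.card_insert_of_notMem hznot,
      inter_erase_not_mem' (i'_not_mem_xset), hxcap]
    push_cast
    linarith

lemma nabranch_fails (hiC : i ∉ candset D i i' j v k T ρ S)
    (hne : (candset D i i' j v k T ρ S).Nonempty) :
    flp D k T ρ (insert (zchoice D i i' j v k T ρ S) (S.erase i')) := by
  obtain ⟨Θ₀, -, hwinup, hathup, hbadup, -, hcatch⟩ := nabranch_pack hiC hne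
  exact ⟨Θ₀, by
    rw [win_domNA hii' hv h0 hDi hDi' hD'i hD'i' hD'o hwinup hathup]; exact hbadup,
    by rw [win_domNA hii' hv h0 hDi hDi' hD'i hD'i' hD'o hwinup hathup]; exact hcatch⟩

include hnrm in
lemma nabranch_image_ok (hnf : ¬ flp D k T ρ S) (hi'S : i' ∈ S)
    (hiC : i ∉ candset D i i' j v k T ρ S)
    (hne : (candset D i i' j v k T ρ S).Nonempty) :
    ¬ flp D' k T ρ (insert (zchoice D i i' j v k T ρ S) (S.erase i')) := by
  obtain ⟨Θ₀, ⟨hzi, hzi', hzS, hzlow, hzhigh⟩, -, -, -, -, -⟩ := nabranch_pack hiC hne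
  have hzmax := (zc_spec hiC hne).2
  set z := zchoice D i i' j v k T ρ S with hzdef
  rintro ⟨Λ, hbad, hcatch⟩
  have hi'U : i' ∉ insert z (S.erase i') := by
    simp only [Finset.mem_insert, Finset.mem_erase]
    rintro (h | ⟨h, -⟩)
    · exact hzi' h.symm
    · exact h rfl
  by_cases hw : winp j v Λ
  · rw [win_dom' hii' hv h0 hDi hDi' hD'i hD'i' hD'o hw] at hbad hcatch
    rw [insert_inter_not_mem hi'U] at hcatch
    by_cases hzx : z ∈ xset D i i' Λ
    · have hbadx : ((xset D i i' Λ).card : ℝ) + 1 < T * n := by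
        rw [Finset.card_insert_of_notMem i'_not_mem_xset] at hbad
        push_cast at hbad
        linarith
      have hznot : z ∉ xset D i i' Λ ∩ (S.erase i') := by
        simp only [Finset.mem_inter, Finset.mem_erase]
        rintro ⟨-, -, h⟩
        exact hzS h
      rw [inter_insert_mem' hzx, Finset.card_insert_of_notMem hznot,
        inter_erase_not_mem' (i'_not_mem_xset)] at hcatch
      push_cast at hcatch
      have hcx : ρ * k - 1 ≤ ((xset D i i' Λ ∩ S).card : ℝ) := by linarith
      by_cases hath : athp D i j Λ
      · exact hiC (Finset.mem_filter.mpr ⟨Finset.mem_univ i,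
          Λ, hw, hbadx, hcx, Or.inl ⟨rfl, hath⟩⟩)
      · obtain ⟨m, hm⟩ := mgood_nonempty hii' hv h0 hDi hDi' hD'i hD'i' hD'o hnrm
          hw hath hbadx hcx hi'S hnf
        have hmc : m ∈ candset D i i' j v k T ρ S := Finset.mem_filter.mpr
          ⟨Finset.mem_univ m, Λ, hw, hbadx, hcx, Or.inr hm⟩
        have h1 : D m j ≤ D z j := hzmax m hmc
        have h2 : Λ j < D m j :=
          (mem_mset.mp (Finset.mem_filter.mp hm).1).2.2.1
        have h3 : D z j ≤ Λ j := (mem_xset.mp hzx).2.2 j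
        linarith
    · rw [inter_insert_not_mem' hzx, inter_erase_not_mem' (i'_not_mem_xset)] at hcatch
      refine hnf ⟨Λ, ?_, le_trans hcatch ?_⟩
      · refine lt_of_le_of_lt ?_ hbad
        have h1 : (domSet D Λ).card ≤ (xset D i i' Λ).card + 1 := le_trans
          (Finset.card_le_card (dom_supset_x hii' hv h0 hDi hDi' hD'i hD'i' hD'o hw).2)
          (Finset.card_insert_le _ _)
        have h2 : (insert i' (xset D i i' Λ)).card = (xset D i i' Λ).card + 1 :=
          Finset.card_insert_of_notMem i'_not_mem_xset
        exact_mod_cast h2 ▸ h1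
      · exact_mod_cast card_inter_mono
          (dom_supset_x hii' hv h0 hDi hDi' hD'i hD'i' hD'o hw).1
  · rw [nonwin_eq hii' hv h0 hDi hDi' hD'i hD'i' hD'o hw] at hbad hcatch
    by_cases hzd : z ∈ domSet D Λ
    · by_cases hi'd : i' ∈ domSet D Λ
      · have hznot : z ∉ domSet D Λ ∩ (S.erase i') := by
          simp only [Finset.mem_inter, Finset.mem_erase]
          rintro ⟨-, -, h⟩
          exact hzS h
        have hi'dS : i' ∈ domSet D Λ ∩ S := Finset.mem_inter.mpr ⟨hi'd, hi'S⟩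
        have hpos : 1 ≤ (domSet D Λ ∩ S).card := Finset.card_pos.mpr ⟨i', hi'dS⟩
        rw [inter_insert_mem' hzd, Finset.card_insert_of_notMem hznot,
          inter_erase_eq, Finset.card_erase_of_mem hi'dS] at hcatch
        have hrw : (domSet D Λ ∩ S).card - 1 + 1 = (domSet D Λ ∩ S).card :=
          Nat.succ_pred_eq_of_pos hpos
        rw [hrw] at hcatch
        exact hnf ⟨Λ, hbad, hcatch⟩
      · refine hi'd ?_
        have hzmem := mem_domSet.mp hzd
        have hB : ∀ j', j' ≠ j → 0 ≤ Λ j' :=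
          fun j' hj' => le_trans (h0 z j') (hzmem j')
        have h1 : (v:ℝ) - 1 ≤ Λ j := le_trans (le_of_lt hzlow) (hzmem j)
        have h2 : (v:ℝ) ≤ Λ j := by
          by_contra hc
          exact hw ⟨hB, h1, lt_of_not_ge hc⟩
        rw [mem_domSet]
        intro j'
        by_cases hj' : j' = j
        · rw [hj', hDi' j, if_pos rfl]; exact h2
        · rw [hDi' j', if_neg hj']; exact hB j' hj'
    · rw [inter_insert_not_mem' hzd, inter_erase_eq] at hcatch
      refine hnf ⟨Λ, hbad, le_trans hcatch ?_⟩
      exact_mod_cast Finset.card_le_card (Finset.erase_subset _ _)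

lemma cross {S1 S2 : Finset (Fin n)} (hnf1 : ¬ flp D k T ρ S1)
    (hiC2 : i ∉ candset D i i' j v k T ρ S2)
    (hne2 : (candset D i i' j v k T ρ S2).Nonempty) (a : Fin n)
    (hsub : (insert (zchoice D i i' j v k T ρ S2) (S2.erase i')).erase a ⊆ S1) :
    a ≠ i ∧ D a j ≤ D (zchoice D i i' j v k T ρ S2) j := by
  obtain ⟨Θ₀, -, hwinup, hathup, hbadup, hqmax, hcatch⟩ := nabranch_pack hiC2 hne2
  have hd : domSet D Θ₀ = xset D i i' Θ₀ :=
    win_domNA hii' hv h0 hDi hDi' hD'i hD'i' hD'o hwinup hathup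
  by_cases had : a ∈ xset D i i' Θ₀
  · constructor
    · intro h
      rw [h] at had
      exact i_not_mem_xset had
    · exact hqmax a had
  · exfalso
    refine hnf1 ⟨Θ₀, by rw [hd]; exact hbadup, ?_⟩
    rw [hd]
    refine le_trans hcatch ?_
    have hsu : xset D i i' Θ₀ ∩
        (insert (zchoice D i i' j v k T ρ S2) (S2.erase i')) ⊆
        xset D i i' Θ₀ ∩ S1 := by
      intro w hw
      obtain ⟨hw1, hw2⟩ := Finset.mem_inter.mp hw
      refine Finset.mem_inter.mpr ⟨hw1, hsub (Finset.mem_erase.mpr ⟨?_, hw2⟩)⟩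
      intro hwa
      rw [hwa] at hw1
      exact had hw1
    exact_mod_cast Finset.card_le_card hsu

omit hii' hv h0 hDi hDi' hD'i hD'i' hD'o in
lemma mem_failSet_iff {E : Fin n → Fin r → ℝ} (hn : 0 < n) (hk : 0 < k)
    {S : Finset (Fin n)} :
    S ∈ failSet k E T ρ ↔ S.card = k ∧ flp E k T ρ S := by
  rw [failSet, Finset.mem_filter, Finset.mem_powersetCard_univ]
  constructor
  · rintro ⟨hc, Θ, h1, h2⟩
    refine ⟨hc, Θ, ?_, ?_⟩
    · rw [trueRecall, div_lt_iff₀ (by exact_mod_cast hn)] at h1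
      exact h1
    · rw [sampleRecall, le_div_iff₀ (by rw [hc]; exact_mod_cast hk)] at h2
      rw [hc] at h2
      exact h2
  · rintro ⟨hc, Θ, h1, h2⟩
    refine ⟨hc, Θ, ?_, ?_⟩
    · rw [trueRecall, div_lt_iff₀ (by exact_mod_cast hn)]
      exact h1
    · rw [sampleRecall, le_div_iff₀ (by rw [hc]; exact_mod_cast hk), hc]
      exact h2

end Structural

end Stmt7Aux

open Stmt7Aux in
/-- An incremental swap (moving the isolated point `v·e_j` down to `(v-1)·e_j` while
raising another row's `j`-th coordinate from `v-1` to `v`) cannot increase the failure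
probability on a rank-normalized dataset with entries in `[0, u]`. -/
theorem stmt7 {n r : ℕ} (k u : ℕ) (T ρ : ℝ) (hρ : T < ρ)
    (D : Fin n → Fin r → ℝ)
    (hrange : ∀ i j, D i j ∈ Set.Icc (0 : ℝ) (u : ℝ))
    (hnorm : ∀ i i' : Fin n, i ≠ i' → ∀ j, D i j ≠ 0 → D i j ≠ D i' j)
    (i i' : Fin n) (hii' : i ≠ i') (j : Fin r) (v : ℕ) (hv : 1 ≤ v)
    (hDi : D i j = (v : ℝ) - 1)
    (hDi' : ∀ j', D i' j' = if j' = j then (v : ℝ) else 0)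
    (D' : Fin n → Fin r → ℝ)
    (hD' : D' = Function.update
      (Function.update D i (Function.update (D i) j (v : ℝ)))
      i' (Function.update (D i') j ((v : ℝ) - 1))) :
    (((failSet k D' T ρ).card : ℝ)
        / ((((Finset.univ : Finset (Fin n)).powersetCard k)).card : ℝ))
      ≤ (((failSet k D T ρ).card : ℝ)
        / ((((Finset.univ : Finset (Fin n)).powersetCard k)).card : ℝ)) := by
  classical
  have h0 : ∀ w j', 0 ≤ D w j' := fun w j' => (hrange w j').1
  have hD'i : ∀ j', D' i j' = if j' = j then (v:ℝ) else D i j' := by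
    intro j'
    rw [hD', Function.update_of_ne hii', Function.update_self,
      Function.update_apply]
  have hD'i' : ∀ j', D' i' j' = if j' = j then (v:ℝ) - 1 else 0 := by
    intro j'
    rw [hD', Function.update_self, Function.update_apply]
    by_cases h : j' = j
    · rw [if_pos h, if_pos h]
    · rw [if_neg h, if_neg h, hDi' j', if_neg h]
  have hD'o : ∀ w, w ≠ i → w ≠ i' → ∀ j', D' w j' = D w j' := by
    intro w hwi hwi' j'
    rw [hD', Function.update_of_ne hwi', Function.update_of_ne hwi]
  have hn : 0 < n := i.pos
  have hcard : (failSet k D' T ρ).card ≤ (failSet k D T ρ).card := by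
    rcases Nat.eq_zero_or_pos k with rfl | hk
    · -- k = 0 : direct inclusion
      refine Finset.card_le_card ?_
      intro S hS
      rw [failSet, Finset.mem_filter] at hS ⊢
      obtain ⟨hpc, Θ, h1, h2⟩ := hS
      refine ⟨hpc, Θ, ?_, ?_⟩
      · rw [trueRecall, div_lt_iff₀ (by exact_mod_cast hn)] at h1 ⊢
        refine lt_of_le_of_lt ?_ h1
        by_cases hw : winp j v Θ
        · have hle : (domSet D Θ).card ≤ (domSet D' Θ).card := by
            rw [win_dom' hii' hv h0 hDi hDi' hD'i hD'i' hD'o hw,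
              Finset.card_insert_of_notMem i'_not_mem_xset]
            exact le_trans (Finset.card_le_card
              (dom_supset_x hii' hv h0 hDi hDi' hD'i hD'i' hD'o hw).2)
              (Finset.card_insert_le _ _)
          exact_mod_cast hle
        · rw [nonwin_eq hii' hv h0 hDi hDi' hD'i hD'i' hD'o hw]
      · have hS0 : S = ∅ := Finset.card_eq_zero.mp
          (Finset.mem_powersetCard_univ.mp hpc)
        subst hS0
        simpa [sampleRecall] using h2
    · -- k > 0 : injection
      refine Finset.card_le_card_of_injOn
        (fun S => if flp D k T ρ S then S
          else insert (zchoice D i i' j v k T ρ S) (S.erase i')) ?_ ?_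
      · intro S hS
        dsimp only
        rw [Finset.mem_coe, mem_failSet_iff hn hk] at hS
        obtain ⟨hSc, hf'⟩ := hS
        by_cases hflp : flp D k T ρ S
        · rw [if_pos hflp, Finset.mem_coe, mem_failSet_iff hn hk]
          exact ⟨hSc, hflp⟩
        · rw [if_neg hflp, Finset.mem_coe, mem_failSet_iff hn hk]
          have hi'S : i' ∈ S :=
            i'_mem_S hii' hv h0 hDi hDi' hD'i hD'i' hD'o hf' hflp
        
          have hne : (candset D i i' j v k T ρ S).Nonempty :=
            cand_nonempty hii' hv h0 hDi hDi' hD'i hD'i' hD'o hnorm hf' hflp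
          have hzS : zchoice D i i' j v k T ρ S ∉ S := by
            by_cases hiC : i ∈ candset D i i' j v k T ρ S
            · rw [zc_eq_of_mem hiC]
              exact i_not_S hii' hv h0 hDi hDi' hD'i hD'i' hD'o hflp hiC
            · obtain ⟨Θ₀, ⟨-, -, h, -, -⟩, -⟩ := nabranch_pack hiC hne
              exact h
          have hck : (insert (zchoice D i i' j v k T ρ S) (S.erase i')).card = k := by
            rw [Finset.card_insert_of_notMem
              (fun hmem => hzS (Finset.mem_of_mem_erase hmem)),
              Finset.card_erase_of_mem hi'S, hSc]
            exact Nat.succ_pred_eq_of_pos hk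
          refine ⟨hck, ?_⟩
          by_cases hiC : i ∈ candset D i i' j v k T ρ S
          · rw [zc_eq_of_mem hiC]
            exact abranch_fails hii' hv h0 hDi hDi' hD'i hD'i' hD'o hflp hiC
          · exact nabranch_fails hii' hv h0 hDi hDi' hD'i hD'i' hD'o hiC hne
      · intro S1 h1 S2 h2 heq
        dsimp only at heq
        rw [Finset.mem_coe, mem_failSet_iff hn hk] at h1 h2
        obtain ⟨hc1, hf1'⟩ := h1
        obtain ⟨hc2, hf2'⟩ := h2
        -- image of the ψ-branch never fails for D'
        have himg : ∀ S : Finset (Fin n), flp D' k T ρ S → ¬ flp D k T ρ S →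
            ¬ flp D' k T ρ (insert (zchoice D i i' j v k T ρ S) (S.erase i')) := by
          intro S hf' hnf
          have hi'S : i' ∈ S :=
            i'_mem_S hii' hv h0 hDi hDi' hD'i hD'i' hD'o hf' hnf
          have hne : (candset D i i' j v k T ρ S).Nonempty :=
            cand_nonempty hii' hv h0 hDi hDi' hD'i hD'i' hD'o hnorm hf' hnf
          by_cases hiC : i ∈ candset D i i' j v k T ρ S
          · rw [zc_eq_of_mem hiC]
            exact abranch_image_ok hii' hv h0 hDi hDi' hD'i hD'i' hD'o hnf hi'S hiC
          · exact nabranch_image_ok hii' hv h0 hDi hDi' hD'i hD'i' hD'o hnorm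
              hnf hi'S hiC hne
        by_cases hflp1 : flp D k T ρ S1 <;> by_cases hflp2 : flp D k T ρ S2
        · rw [if_pos hflp1, if_pos hflp2] at heq
          exact heq
        · rw [if_pos hflp1, if_neg hflp2] at heq
          exact absurd (heq ▸ hf1') (himg S2 hf2' hflp2)
        · rw [if_neg hflp1, if_pos hflp2] at heq
          exact absurd (heq.symm ▸ hf2') (himg S1 hf1' hflp1)
        · rw [if_neg hflp1, if_neg hflp2] at heq
          -- both in the ψ-branch
          have hi'S1 : i' ∈ S1 :=
            i'_mem_S hii' hv h0 hDi hDi' hD'i hD'i' hD'o hf1' hflp1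
          have hi'S2 : i' ∈ S2 :=
            i'_mem_S hii' hv h0 hDi hDi' hD'i hD'i' hD'o hf2' hflp2
          have hne1 : (candset D i i' j v k T ρ S1).Nonempty :=
            cand_nonempty hii' hv h0 hDi hDi' hD'i hD'i' hD'o hnorm hf1' hflp1
          have hne2 : (candset D i i' j v k T ρ S2).Nonempty :=
            cand_nonempty hii' hv h0 hDi hDi' hD'i hD'i' hD'o hnorm hf2' hflp2
          have hznotS : ∀ S : Finset (Fin n), ¬ flp D k T ρ S →
              (candset D i i' j v k T ρ S).Nonempty →
              zchoice D i i' j v k T ρ S ∉ S := by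
            intro S hnf hne
            by_cases hiC : i ∈ candset D i i' j v k T ρ S
            · rw [zc_eq_of_mem hiC]
              exact i_not_S hii' hv h0 hDi hDi' hD'i hD'i' hD'o hnf hiC
            · obtain ⟨Θ₀, ⟨-, -, h, -, -⟩, -⟩ := nabranch_pack hiC hne
              exact h
          have hz1S : zchoice D i i' j v k T ρ S1 ∉ S1 := hznotS S1 hflp1 hne1
          have hz2S : zchoice D i i' j v k T ρ S2 ∉ S2 := hznotS S2 hflp2 hne2
          by_cases hzz : zchoice D i i' j v k T ρ S1 = zchoice D i i' j v k T ρ S2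
          · -- equal inserted elements ⇒ equal sets
            have he1 : S1.erase i' = S2.erase i' := by
              have e1 : (insert (zchoice D i i' j v k T ρ S1) (S1.erase i')).erase
                  (zchoice D i i' j v k T ρ S1) = S1.erase i' :=
                Finset.erase_insert (fun hmem => hz1S (Finset.mem_of_mem_erase hmem))
              have e2 : (insert (zchoice D i i' j v k T ρ S2) (S2.erase i')).erase
                  (zchoice D i i' j v k T ρ S2) = S2.erase i' :=
                Finset.erase_insert (fun hmem => hz2S (Finset.mem_of_mem_erase hmem))
              rw [← e1, ← e2, heq, hzz]
            rw [← Finset.insert_erase hi'S1, ← Finset.insert_erase hi'S2, he1]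
          · exfalso
            -- the two inserted elements differ : cross contradiction
            have hsub12 : (insert (zchoice D i i' j v k T ρ S2) (S2.erase i')).erase
                (zchoice D i i' j v k T ρ S1) ⊆ S1 := by
              rw [← heq,
                Finset.erase_insert (fun hmem => hz1S (Finset.mem_of_mem_erase hmem))]
              exact Finset.erase_subset _ _
            have hsub21 : (insert (zchoice D i i' j v k T ρ S1) (S1.erase i')).erase
                (zchoice D i i' j v k T ρ S2) ⊆ S2 := by
              rw [heq,
                Finset.erase_insert (fun hmem => hz2S (Finset.mem_of_mem_erase hmem))]
              exact Finset.erase_subset _ _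
            by_cases hiC2 : i ∈ candset D i i' j v k T ρ S2
            · -- then z2 = i ; z1 ≠ z2 forces i ∉ cand S1, and cross gives z2 ≠ i
              have hiC1 : i ∉ candset D i i' j v k T ρ S1 := by
                intro hiC1
                exact hzz (by rw [zc_eq_of_mem hiC1, zc_eq_of_mem hiC2])
              have := (cross hii' hv h0 hDi hDi' hD'i hD'i' hD'o hflp2 hiC1 hne1
                (zchoice D i i' j v k T ρ S2) hsub21).1
              exact this (zc_eq_of_mem hiC2)
            · have hcr1 := cross hii' hv h0 hDi hDi' hD'i hD'i' hD'o hflp1 hiC2 hne2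
                (zchoice D i i' j v k T ρ S1) hsub12
              have hiC1 : i ∉ candset D i i' j v k T ρ S1 := by
                intro hiC1
                exact hcr1.1 (zc_eq_of_mem hiC1)
              have hcr2 := cross hii' hv h0 hDi hDi' hD'i hD'i' hD'o hflp2 hiC1 hne1
                (zchoice D i i' j v k T ρ S2) hsub21
              have heqv : D (zchoice D i i' j v k T ρ S1) j
                  = D (zchoice D i i' j v k T ρ S2) j :=
                le_antisymm hcr1.2 hcr2.2
              obtain ⟨Θ₀, ⟨-, -, -, hzlow, -⟩, -⟩ := nabranch_pack hiC1 hne1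
              have hvpos : (1:ℝ) ≤ (v:ℝ) := by exact_mod_cast hv
              exact hnorm _ _ hzz j (ne_of_gt (by linarith)) heqv
  have hden : (0:ℝ) ≤ (((Finset.univ : Finset (Fin n)).powersetCard k).card : ℝ) := by
    positivity
  rcases eq_or_lt_of_le hden with hzero | hpos
  · rw [← hzero, div_zero, div_zero]
  · exact (div_le_div_iff_of_pos_right hpos).mpr (by exact_mod_cast hcard)

end
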